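/- arXiv:1502.03225 — 5 statements merged into one kernel-verified Lean document; each statement's English description precedes it below -/
import Mathlib

section
/- Let a₁,…,a_m, b₁₁,…,b_{m1}, b₁₁,…,b_{1n} be elements of a pregeometry such that the set P = {a_i : 1 ≤ i ≤ m} ∪ {b_{i1} : 1 ≤ i ≤ m} ∪ {b_{1j} : 1 ≤ j ≤ n} is independent (note b₁₁ occurs once, so |P| = 2m + n − 1). Suppose for all i, j there are elements b_{ij} ∈ cl({b_{i1}, b_{1j}, b₁₁}) and e_{ij} ∈ cl({a_i, b_{ij}}). Then the set {a_i : i ≤ m} ∪ {b_{ij} : i ≤ m, j ≤ n} ∪ {e_{ij} : i ≤ m, j ≤ n} has dimension exactly 2m + n − 1. -/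
/-- A pregeometry (finitary matroid) given by a closure operator together with
its rank function on finite subsets. -/
structure Pregeometry (α : Type*) [DecidableEq α] where
  cl : Set α → Set α
  subset_cl : ∀ A : Set α, A ⊆ cl A
  cl_mono : ∀ {A B : Set α}, A ⊆ B → cl A ⊆ cl B
  cl_idem : ∀ A : Set α, cl (cl A) = cl A
  finChar : ∀ (A : Set α) (x : α), x ∈ cl A → ∃ F : Finset α, ↑F ⊆ A ∧ x ∈ cl ↑F
  exchange : ∀ (A : Set α) (x y : α), x ∈ cl (A ∪ {y}) → x ∉ cl A → y ∈ cl (A ∪ {x})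
  dim : Finset α → ℕ
  dim_le_card : ∀ F : Finset α, dim F ≤ F.card
  dim_mono : ∀ {F G : Finset α}, F ⊆ G → dim F ≤ dim G
  dim_submodular : ∀ F G : Finset α, dim (F ∪ G) + dim (F ∩ G) ≤ dim F + dim G
  dim_cl : ∀ F G : Finset α, (↑F : Set α) ⊆ cl ↑G → dim (F ∪ G) = dim G

theorem array_dim_eq {α : Type*} [DecidableEq α] (P : Pregeometry α)
    (m n : ℕ) (hm : 1 ≤ m) (hn : 1 ≤ n)
    (a : ℕ → α) (b e : ℕ → ℕ → α)
    (Pset : Finset α)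
    (hPset : Pset = ((Finset.Icc 1 m).image a) ∪ ((Finset.Icc 1 m).image fun i => b i 1)
        ∪ ((Finset.Icc 1 n).image fun j => b 1 j))
    (hcard : Pset.card = 2 * m + n - 1)
    (hindep : P.dim Pset = Pset.card)
    (hb : ∀ i ∈ Finset.Icc 1 m, ∀ j ∈ Finset.Icc 1 n,
        b i j ∈ P.cl {b i 1, b 1 j, b 1 1})
    (he : ∀ i ∈ Finset.Icc 1 m, ∀ j ∈ Finset.Icc 1 n,
        e i j ∈ P.cl {a i, b i j}) :
    P.dim (((Finset.Icc 1 m).image a)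
        ∪ ((Finset.Icc 1 m ×ˢ Finset.Icc 1 n).image fun p => b p.1 p.2)
        ∪ ((Finset.Icc 1 m ×ˢ Finset.Icc 1 n).image fun p => e p.1 p.2))
      = 2 * m + n - 1 := by
  set S : Finset α := (((Finset.Icc 1 m).image a)
        ∪ ((Finset.Icc 1 m ×ˢ Finset.Icc 1 n).image fun p => b p.1 p.2)
        ∪ ((Finset.Icc 1 m ×ˢ Finset.Icc 1 n).image fun p => e p.1 p.2)) with hS
  -- every element of Pset lies in cl Pset, keys for b and e
  have hPsub : (↑Pset : Set α) ⊆ P.cl ↑Pset := P.subset_cl _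
  have hbP : ∀ i ∈ Finset.Icc 1 m, ∀ j ∈ Finset.Icc 1 n, b i j ∈ P.cl ↑Pset := by
    intro i hi j hj
    refine P.cl_mono ?_ (hb i hi j hj)
    intro x hx
    simp only [Set.mem_insert_iff, Set.mem_singleton_iff] at hx
    subst hPset
    rcases hx with h | h | h
    · subst h
      simp only [Finset.coe_union, Set.mem_union, Finset.coe_image, Set.mem_image]
      exact Or.inl (Or.inr ⟨i, by simpa using hi, rfl⟩)
    · subst h
      simp only [Finset.coe_union, Set.mem_union, Finset.coe_image, Set.mem_image]
      exact Or.inr ⟨j, by simpa using hj, rfl⟩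
    · subst h
      simp only [Finset.coe_union, Set.mem_union, Finset.coe_image, Set.mem_image]
      exact Or.inr ⟨1, by simpa using hn, rfl⟩
  have haP : ∀ i ∈ Finset.Icc 1 m, a i ∈ P.cl ↑Pset := by
    intro i hi
    apply hPsub
    subst hPset
    simp only [Finset.coe_union, Set.mem_union, Finset.coe_image, Set.mem_image]
    exact Or.inl (Or.inl ⟨i, by simpa using hi, rfl⟩)
  have heP : ∀ i ∈ Finset.Icc 1 m, ∀ j ∈ Finset.Icc 1 n, e i j ∈ P.cl ↑Pset := by
    intro i hi j hj
    have h1 : ({a i, b i j} : Set α) ⊆ P.cl ↑Pset := by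
      intro x hx
      rcases hx with h | h
      · subst h; exact haP i hi
      · rw [Set.mem_singleton_iff] at h; subst h; exact hbP i hi j hj
    have := P.cl_mono h1 (he i hi j hj)
    rwa [P.cl_idem] at this
  -- S ⊆ cl Pset
  have hScl : (↑S : Set α) ⊆ P.cl ↑Pset := by
    intro x hx
    simp only [hS, Finset.coe_union, Set.mem_union, Finset.coe_image, Set.mem_image] at hx
    rcases hx with (⟨i, hi, rfl⟩ | ⟨p, hp, rfl⟩) | ⟨p, hp, rfl⟩
    · exact haP i (by simpa using hi)
    · simp only [Finset.mem_coe, Finset.mem_product] at hp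
      exact hbP p.1 hp.1 p.2 hp.2
    · simp only [Finset.mem_coe, Finset.mem_product] at hp
      exact heP p.1 hp.1 p.2 hp.2
  -- Pset ⊆ S
  have hPS : Pset ⊆ S := by
    subst hPset
    intro x hx
    simp only [Finset.mem_union, Finset.mem_image] at hx
    simp only [hS, Finset.mem_union, Finset.mem_image, Finset.mem_product]
    rcases hx with (⟨i, hi, rfl⟩ | ⟨i, hi, rfl⟩) | ⟨j, hj, rfl⟩
    · exact Or.inl (Or.inl ⟨i, hi, rfl⟩)
    · exact Or.inl (Or.inr ⟨(i, 1), ⟨hi, by simpa using hn⟩, rfl⟩)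
    · exact Or.inl (Or.inr ⟨(1, j), ⟨by simpa using hm, hj⟩, rfl⟩)
  have h1 : P.dim (S ∪ Pset) = P.dim Pset := P.dim_cl S Pset hScl
  rw [Finset.union_eq_left.mpr hPS] at h1
  rw [h1, hindep, hcard]
end

section
/- Let a, b, c be finite subsets of a pregeometry and n a natural number such that dim(a) = dim(b) = n, dim(a ∪ b) = 2n, c ⊆ cl(a ∪ b), a ⊆ cl(b ∪ c), and dim(b ∪ c) = dim(b) + dim(c). Then dim(c) = n. -/
theorem dim_germ {α : Type*} [DecidableEq α] (P : Pregeometry α)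
    (a b c : Finset α) (n : ℕ)
    (ha : P.dim a = n) (hb : P.dim b = n) (hab : P.dim (a ∪ b) = 2 * n)
    (hc : (↑c : Set α) ⊆ P.cl ↑(a ∪ b))
    (ha' : (↑a : Set α) ⊆ P.cl ↑(b ∪ c))
    (hbc : P.dim (b ∪ c) = P.dim b + P.dim c) :
    P.dim c = n := by
  have h1 := P.dim_cl c (a ∪ b) hc
  have h2 := P.dim_cl a (b ∪ c) ha'
  have he : c ∪ (a ∪ b) = a ∪ (b ∪ c) := by
    ext x; simp [Finset.mem_union]; tauto
  rw [he] at h1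
  omega
end

section
/- Let G be a group and S ⊆ G a subset with S⁻¹ = S, and suppose that for all τ₁, τ₂, τ₃ ∈ S there exists σ ∈ S such that τ₁·σ ∈ S and σ⁻¹·τ₂·τ₃ ∈ S. Then S·S·S ⊆ S·S, and consequently every finite product of at least two elements of S lies in S·S; in particular if additionally 1 ∈ S·S then S·S ∪ S is the subgroup of G generated by S. -/
open Pointwise

theorem product_of_two {G : Type*} [Group G] (S : Set G) (hinv : S⁻¹ = S)
    (h : ∀ τ₁ ∈ S, ∀ τ₂ ∈ S, ∀ τ₃ ∈ S,
      ∃ σ ∈ S, τ₁ * σ ∈ S ∧ σ⁻¹ * τ₂ * τ₃ ∈ S) :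
    S * S * S ⊆ S * S
    ∧ (∀ l : List G, 2 ≤ l.length → (∀ x ∈ l, x ∈ S) → l.prod ∈ S * S)
    ∧ ((1 : G) ∈ S * S → S * S ∪ S = ↑(Subgroup.closure S)) := by
  have key : S * S * S ⊆ S * S := by
    rintro x ⟨_, ⟨a, ha, b, hb, rfl⟩, c, hc, rfl⟩
    obtain ⟨σ, hσ, h1, h2⟩ := h a ha b hb c hc
    exact ⟨a * σ, h1, σ⁻¹ * b * c, h2, by group⟩
  refine ⟨key, ?_, ?_⟩
  · intro l
    induction l with
    | nil => simp
    | cons x t ih =>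
      intro hlen hmem
      match t, hlen with
      | y :: t, _ =>
        match t with
        | [] =>
          simp only [List.prod_cons, List.prod_nil, mul_one]
          exact Set.mul_mem_mul (hmem x (by simp)) (hmem y (by simp))
        | z :: t =>
          have hp : (y :: z :: t).prod ∈ S * S :=
            ih (by simp) (fun a ha => hmem a (List.mem_cons_of_mem _ ha))
          obtain ⟨a, ha, b, hb, hab⟩ := hp
          have : x * a * b ∈ S * S :=
            key ⟨x * a, Set.mul_mem_mul (hmem x (by simp)) ha, b, hb, rfl⟩
          simpa [List.prod_cons, ← hab, mul_assoc] using this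
  · intro hone
    have hSS : S * S * (S * S) ⊆ S * S := by
      rintro x ⟨a, ⟨a1, ha1, a2, ha2, rfl⟩, b, ⟨c, hc, d, hd, rfl⟩, rfl⟩
      have h1 : a1 * a2 * c ∈ S * S :=
        key ⟨a1 * a2, Set.mul_mem_mul ha1 ha2, c, hc, rfl⟩
      have h2 : a1 * a2 * c * d ∈ S * S := key ⟨a1 * a2 * c, h1, d, hd, rfl⟩
      rwa [mul_assoc] at h2
    have hsub : ∀ x ∈ S * S ∪ S, ∀ y ∈ S * S ∪ S, x * y ∈ S * S ∪ S := by
      rintro x (hx | hx) y (hy | hy)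
      · exact Or.inl (hSS (Set.mul_mem_mul hx hy))
      · exact Or.inl (key (Set.mul_mem_mul hx hy))
      · obtain ⟨a, ha, b, hb, rfl⟩ := hy
        have h1 : x * a * b ∈ S * S := key ⟨x * a, Set.mul_mem_mul hx ha, b, hb, rfl⟩
        rw [← mul_assoc]
        exact Or.inl h1
      · exact Or.inl (Set.mul_mem_mul hx hy)
    have hinv' : ∀ x ∈ S * S ∪ S, x⁻¹ ∈ S * S ∪ S := by
      rintro x (⟨a, ha, b, hb, rfl⟩ | hx)
      · refine Or.inl ⟨b⁻¹, ?_, a⁻¹, ?_, by group⟩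
        · rw [← hinv]; exact Set.inv_mem_inv.mpr hb
        · rw [← hinv]; exact Set.inv_mem_inv.mpr ha
      · right; rw [← hinv]; exact Set.inv_mem_inv.mpr hx
    let H : Subgroup G :=
      { carrier := S * S ∪ S
        mul_mem' := fun {a b} ha hb => hsub a ha b hb
        one_mem' := Or.inl hone
        inv_mem' := fun {a} ha => hinv' a ha }
    have : Subgroup.closure S = H :=
      le_antisymm (Subgroup.closure_le H |>.mpr fun x hx => Or.inr hx)
        (fun x hx => by
          rcases hx with ⟨a, ha, b, hb, rfl⟩ | hx
          · exact mul_mem (Subgroup.subset_closure ha) (Subgroup.subset_closure hb)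
          · exact Subgroup.subset_closure hx)
    rw [this]; rfl
end

section
/- Let (a_{ij})_{1 ≤ i ≤ M, 1 ≤ j ≤ N} be an array of elements of a pregeometry. Suppose that for every i ≥ 2 and every set J of column indices, dim(a_{i,J} / a_{<i,J}) ≤ 2, and for every j ≥ 3 and every set I of row indices, dim(a_{I,j} / a_{I,<j}) ≤ 1, where a_{I,J} denotes {a_{ij} : i ∈ I, j ∈ J}, a_{<i,J} = {a_{i'j} : i' < i, j ∈ J}, and a_{I,<j} = {a_{i j'} : i ∈ I, j' < j}. If the m × n subrectangle C = a_{I₀,J₀} with I₀ = {1,…,m}, J₀ = {1,…,n}, m, n ≥ 2, satisfies dim(C) < 2m + n − 2, then dim(a_{≤M, ≤N}) < 2M + N − 2. -/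
theorem array_deficiency_propagates {α : Type*} [DecidableEq α] (P : Pregeometry α)
    (M N : ℕ) (a : ℕ → ℕ → α)
    (rect : Finset ℕ → Finset ℕ → Finset α)
    (hrect : ∀ I J, rect I J = (I ×ˢ J).image fun p => a p.1 p.2)
    (hrow : ∀ i, 2 ≤ i → i ≤ M → ∀ J ⊆ Finset.Icc 1 N,
        P.dim (rect {i} J ∪ rect (Finset.Icc 1 (i - 1)) J)
          - P.dim (rect (Finset.Icc 1 (i - 1)) J) ≤ 2)
    (hcol : ∀ j, 3 ≤ j → j ≤ N → ∀ I ⊆ Finset.Icc 1 M,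
        P.dim (rect I {j} ∪ rect I (Finset.Icc 1 (j - 1)))
          - P.dim (rect I (Finset.Icc 1 (j - 1))) ≤ 1)
    (m n : ℕ) (hm : 2 ≤ m) (hn : 2 ≤ n) (hmM : m ≤ M) (hnN : n ≤ N)
    (hdef : P.dim (rect (Finset.Icc 1 m) (Finset.Icc 1 n)) < 2 * m + n - 2) :
    P.dim (rect (Finset.Icc 1 M) (Finset.Icc 1 N)) < 2 * M + N - 2 := by
  have hce : ∀ (I J J' : Finset ℕ), rect I (J ∪ J') = rect I J ∪ rect I J' := by
    intro I J J'; simp [hrect, Finset.product_union, Finset.image_union]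
  have hre : ∀ (I I' J : Finset ℕ), rect (I ∪ I') J = rect I J ∪ rect I' J := by
    intro I I' J; simp [hrect, Finset.union_product, Finset.image_union]
  have step1 : ∀ j, n ≤ j → j ≤ N →
      P.dim (rect (Finset.Icc 1 m) (Finset.Icc 1 j)) < 2 * m + j - 2 := by
    intro j hj
    induction j, hj using Nat.le_induction with
    | base => intro _; exact hdef
    | succ j hj ih =>
      intro hjN
      have h1 := hcol (j + 1) (by omega) hjN (Finset.Icc 1 m)
        (Finset.Icc_subset_Icc le_rfl hmM)
      simp only [Nat.add_sub_cancel] at h1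
      have hIcc : Finset.Icc 1 (j + 1) = {j + 1} ∪ Finset.Icc 1 j := by
        ext x; simp [Finset.mem_Icc]; omega
      rw [hIcc, hce]
      have h2 := ih (by omega)
      omega
  have step2 : ∀ i, m ≤ i → i ≤ M →
      P.dim (rect (Finset.Icc 1 i) (Finset.Icc 1 N)) < 2 * i + N - 2 := by
    intro i hi
    induction i, hi using Nat.le_induction with
    | base => intro _; exact step1 N hnN le_rfl
    | succ i hi ih =>
      intro hiM
      have h1 := hrow (i + 1) (by omega) hiM (Finset.Icc 1 N) le_rfl
      simp only [Nat.add_sub_cancel] at h1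
      have hIcc : Finset.Icc 1 (i + 1) = {i + 1} ∪ Finset.Icc 1 i := by
        ext x; simp [Finset.mem_Icc]; omega
      rw [hIcc, hre]
      have h2 := ih (by omega)
      omega
  exact step2 M hmM le_rfl
end

section
/- Let G be an abelian group equipped with a pregeometry cl on its underlying set such that x + y ∈ cl({x, y}) and −x ∈ cl({x}) for all x, y ∈ G. Let c be a finite subset of G and β, γ₁, γ₂ ∈ G with dim({β, γ₁, γ₂}/c) = 3. Then β ∉ cl(c ∪ {β + γ₁, β + γ₂}). -/
lemma Pregeometry.cl_of_mem_cl {α : Type*} [DecidableEq α] (P : Pregeometry α)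
    {A B : Set α} (hB : B ⊆ P.cl A) : P.cl B ⊆ P.cl A := by
  have := P.cl_mono hB
  rwa [P.cl_idem] at this

lemma Pregeometry.sub_mem_cl {G : Type*} [AddCommGroup G] [DecidableEq G]
    (P : Pregeometry G)
    (hadd : ∀ x y : G, x + y ∈ P.cl {x, y}) (hneg : ∀ x : G, -x ∈ P.cl {x})
    {A : Set G} {x y : G} (hx : x ∈ P.cl A) (hy : y ∈ P.cl A) : x - y ∈ P.cl A := by
  have hny : -y ∈ P.cl A := by
    apply P.cl_of_mem_cl (B := {y}) (by simpa using hy)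
    exact hneg y
  have : x + -y ∈ P.cl A := by
    apply P.cl_of_mem_cl (B := {x, -y})
    · intro z hz
      rcases hz with rfl | hz
      · exact hx
      · simp only [Set.mem_singleton_iff] at hz; subst hz; exact hny
    · exact hadd x (-y)
  simpa [sub_eq_add_neg] using this

lemma Pregeometry.dim_union_le {α : Type*} [DecidableEq α] (P : Pregeometry α)
    (F G : Finset α) : P.dim (F ∪ G) ≤ P.dim F + G.card := by
  calc P.dim (F ∪ G) ≤ P.dim (F ∪ G) + P.dim (F ∩ G) := Nat.le_add_right _ _
    _ ≤ P.dim F + P.dim G := P.dim_submodular F G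
    _ ≤ P.dim F + G.card := by have := P.dim_le_card G; omega

theorem not_mem_cl_translates {G : Type*} [AddCommGroup G] [DecidableEq G]
    (P : Pregeometry G)
    (hadd : ∀ x y : G, x + y ∈ P.cl {x, y}) (hneg : ∀ x : G, -x ∈ P.cl {x})
    (c : Finset G) (β γ₁ γ₂ : G)
    (h : P.dim (({β, γ₁, γ₂} : Finset G) ∪ c) - P.dim c = 3) :
    β ∉ P.cl (↑c ∪ {β + γ₁, β + γ₂}) := by
  intro hβ
  set S : Finset G := c ∪ {β + γ₁, β + γ₂} with hS
  have hScoe : (↑S : Set G) = ↑c ∪ {β + γ₁, β + γ₂} := by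
    simp [hS, Finset.coe_union, Finset.coe_insert, Finset.coe_singleton]
  have hβS : β ∈ P.cl ↑S := by rw [hScoe]; exact hβ
  have h1 : β + γ₁ ∈ P.cl ↑S := P.subset_cl _ (by rw [hScoe]; right; left; rfl)
  have h2 : β + γ₂ ∈ P.cl ↑S := P.subset_cl _ (by rw [hScoe]; right; right; rfl)
  have hγ₁ : γ₁ ∈ P.cl ↑S := by
    have := P.sub_mem_cl hadd hneg h1 hβS; simpa using this
  have hγ₂ : γ₂ ∈ P.cl ↑S := by
    have := P.sub_mem_cl hadd hneg h2 hβS; simpa using this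
  have hsub : (↑({β, γ₁, γ₂} : Finset G) : Set G) ⊆ P.cl ↑S := by
    intro z hz
    simp only [Finset.coe_insert, Finset.coe_singleton, Set.mem_insert_iff,
      Set.mem_singleton_iff] at hz
    rcases hz with rfl | rfl | rfl
    · exact hβS
    · exact hγ₁
    · exact hγ₂
  have hdimcl : P.dim (({β, γ₁, γ₂} : Finset G) ∪ S) = P.dim S := P.dim_cl _ S hsub
  have hmono : P.dim (({β, γ₁, γ₂} : Finset G) ∪ c) ≤ P.dim (({β, γ₁, γ₂} : Finset G) ∪ S) :=
    P.dim_mono (Finset.union_subset_union_right Finset.subset_union_left)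
  have hSle : P.dim S ≤ P.dim c + 2 := by
    have := P.dim_union_le c ({β + γ₁, β + γ₂} : Finset G)
    rw [← hS] at this
    have hcard : ({β + γ₁, β + γ₂} : Finset G).card ≤ 2 :=
      Finset.card_insert_le _ _ |>.trans (by simp)
    omega
  have hmono' : P.dim c ≤ P.dim (({β, γ₁, γ₂} : Finset G) ∪ c) :=
    P.dim_mono Finset.subset_union_right
  omega
end
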